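/- arXiv:1604.06044 — 4 statements merged into one kernel-verified Lean document; each statement's English description precedes it below -/
import Mathlib

section
/- Let κ be an infinite cardinal, let D be a uniform ultrafilter on κ, let λ1 and λ2 be regular cardinals greater than κ, let N = N1 + N2 be a linear order as in the context, and let ā = ⟨a_{s,t} : s, t ∈ N⟩ ∈ S_c. Then there exist a (λ1+λ2)⁺-saturated dense linear order M and functions f_s : κ → M for s ∈ N such that: whenever s < t in N, a_{s,t} = {i < κ : f_s(i) < f_t(i)}; and the ranges of the functions f_s (s ∈ N) are pairwise disjoint. -/
universe u

open Set

/-- `(J₁, J₂)` is a cut of the linear order `I`. -/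
def IsCut {I : Type u} [LinearOrder I] (J₁ J₂ : Set I) : Prop :=
  J₁.Nonempty ∧ J₂.Nonempty ∧ J₁ ∪ J₂ = univ ∧ Disjoint J₁ J₂ ∧
    (∀ a ∈ J₁, ∀ b ∈ J₂, a < b) ∧
    (∀ a ∈ J₁, ∃ a' ∈ J₁, a < a') ∧ (∀ b ∈ J₂, ∃ b' ∈ J₂, b' < b)

/-- The least cardinality of a subset of `J` cofinal in `J`. -/
noncomputable def cofinality {I : Type u} [LinearOrder I] (J : Set I) : Cardinal.{u} :=
  sInf {c | ∃ S : Set I, S ⊆ J ∧ (∀ x ∈ J, ∃ y ∈ S, x ≤ y) ∧ Cardinal.mk S = c}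

/-- The least cardinality of a subset of `J` coinitial in `J`. -/
noncomputable def coinitiality {I : Type u} [LinearOrder I] (J : Set I) : Cardinal.{u} :=
  sInf {c | ∃ S : Set I, S ⊆ J ∧ (∀ x ∈ J, ∃ y ∈ S, y ≤ x) ∧ Cardinal.mk S = c}
/-- `M` is a `μ⁺`-saturated dense linear order: for any sets `A, B` of size `≤ μ`
(possibly empty) with every element of `A` below every element of `B`, some element
of `M` lies strictly between `A` and `B`. -/
def SatDense (M : Type u) [LinearOrder M] (μ : Cardinal.{u}) : Prop :=
  ∀ A B : Set M, Cardinal.mk A ≤ μ → Cardinal.mk B ≤ μ →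
    (∀ a ∈ A, ∀ b ∈ B, a < b) →
    ∃ x : M, (∀ a ∈ A, a < x) ∧ (∀ b ∈ B, x < b)

/-- The suborder `S` of `M` is a `μ`-saturated dense linear order: for all `A, B ⊆ S`
of cardinality `< μ` with every element of `A` below every element of `B`, some
element of `S` lies strictly between `A` and `B`. -/
def SatDenseOn {M : Type u} [LinearOrder M] (S : Set M) (μ : Cardinal.{u}) : Prop :=
  ∀ A B : Set M, A ⊆ S → B ⊆ S → Cardinal.mk A < μ → Cardinal.mk B < μ →
    (∀ a ∈ A, ∀ b ∈ B, a < b) →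
    ∃ x ∈ S, (∀ a ∈ A, a < x) ∧ (∀ b ∈ B, x < b)

/-- Membership in `S_c`: a family `⟨a s t : s, t ∈ N⟩` of subsets of `κ`
satisfying conditions (i)-(iv). -/
def InS {κ : Type u} (D : Ultrafilter κ) {N : Type u} [LinearOrder N]
    (a : N → N → Set κ) : Prop :=
  (∀ s, a s s = ∅) ∧
  (∀ s t, s ≠ t → a s t = (a t s)ᶜ) ∧
  (∀ s t, s < t → a s t ∈ (D : Filter κ)) ∧
  (∀ s₁ s₂ s₃, s₁ < s₂ → s₂ < s₃ →
    a s₁ s₂ ∩ a s₂ s₃ ⊆ a s₁ s₃ ∧ a s₃ s₂ ∩ a s₂ s₁ ⊆ a s₃ s₁)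

/-- The order of `N⁺ = N₁ + {s⁎} + N₂`, where `s⁎` is a new point (the element
`Sum.inr ()`) inserted between the initial segment `N₁` and its complement `N₂`. -/
def ltPlus {N : Type u} [LinearOrder N] (N₁ : Set N) :
    N ⊕ Unit → N ⊕ Unit → Prop
  | Sum.inl s, Sum.inl t => s < t
  | Sum.inl s, Sum.inr _ => s ∈ N₁
  | Sum.inr _, Sum.inl t => t ∉ N₁
  | Sum.inr _, Sum.inr _ => False

/-- The extended family `ā¹ = ā * b̄` on `N⁺`: it agrees with `a` on `N`, and
`a¹ s s⁎ = b s`, `a¹ s⁎ s = κ \ b s` for `s ∈ N`, and `a¹ s⁎ s⁎ = ∅`. -/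
def aExt {κ N : Type u} (a : N → N → Set κ) (b : N → Set κ) :
    N ⊕ Unit → N ⊕ Unit → Set κ
  | Sum.inl s, Sum.inl t => a s t
  | Sum.inl s, Sum.inr _ => b s
  | Sum.inr _, Sum.inl t => (b t)ᶜ
  | Sum.inr _, Sum.inr _ => ∅

/-- `b̄ = ⟨b s : s ∈ N⟩` is a `c`-solution of `ā`: the extended family `ā¹` satisfies
conditions (i)-(iv) on `N⁺`. -/
def IsSolution {κ : Type u} (D : Ultrafilter κ) {N : Type u} [LinearOrder N]
    (N₁ : Set N) (a : N → N → Set κ) (b : N → Set κ) : Prop :=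
  (∀ s, aExt a b s s = ∅) ∧
  (∀ s t, s ≠ t → aExt a b s t = (aExt a b t s)ᶜ) ∧
  (∀ s t, ltPlus N₁ s t → aExt a b s t ∈ (D : Filter κ)) ∧
  (∀ s₁ s₂ s₃, ltPlus N₁ s₁ s₂ → ltPlus N₁ s₂ s₃ →
    aExt a b s₁ s₂ ∩ aExt a b s₂ s₃ ⊆ aExt a b s₁ s₃ ∧
    aExt a b s₃ s₂ ∩ aExt a b s₂ s₁ ⊆ aExt a b s₃ s₁)

/-- `ā` is `c`-solvable if it has a `c`-solution. -/
def Solvable {κ : Type u} (D : Ultrafilter κ) {N : Type u} [LinearOrder N]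
    (N₁ : Set N) (a : N → N → Set κ) : Prop :=
  ∃ b : N → Set κ, IsSolution D N₁ a b

/-!
For each `i : κ`, conditions (i), (ii) and (iv) say exactly that `s ≺ᵢ t ↔ i ∈ a s t` is a
strict linear order on `N`. Ordering the pairs `(i, s)` lexicographically (any order on `κ`
first, then `≺ᵢ`), it remains to embed an arbitrary linear order `X` into a `μ⁺`-saturated dense
one; the ranges of the `f s` are then disjoint by injectivity.

Take `L ×ₗ S`, where `L` is the complete chain of lower sets of `X` and `S` consists of the
sequences of length `(μ + ℵ₀)⁺` in a chain `⊥ < c < ⊤` that are eventually `c`, ordered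
lexicographically. Small sets `A < B` of `L ×ₗ S` are separated inside the fibre over the
supremum of the first coordinates of `A`. In `S`, by regularity all members of `A ∪ B` are `c`
from some `γ` on; the lexicographic supremum `x` of `A`, cut off at `γ`, lies between `A` and
`B`, and setting `x γ` to `⊤` or `⊥` moves it off `A` or `B`.
-/

open Cardinal Function

section LexSup

variable {ι V : Type u} [LinearOrder ι] [WellFoundedLT ι] [CompleteLinearOrder V]

/-- The lexicographic supremum of `A` below `γ`, continued by the constant `c` from `γ` on. -/
noncomputable def lexSupBelow (A : Set (ι → V)) (γ : ι) (c : V) : ι → V :=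
  wellFounded_lt.fix fun β x =>
    if β < γ then sSup ((fun f => f β) '' {f ∈ A | ∀ δ (h : δ < β), f δ = x δ h}) else c

theorem lexSupBelow_eq (A : Set (ι → V)) (γ : ι) (c : V) (β : ι) :
    lexSupBelow A γ c β = if β < γ then
      sSup ((fun f => f β) '' {f ∈ A | ∀ δ < β, f δ = lexSupBelow A γ c δ}) else c :=
  wellFounded_lt.fix_eq _ β

theorem lexSupBelow_of_le {A : Set (ι → V)} {γ β : ι} {c : V} (h : γ ≤ β) :
    lexSupBelow A γ c β = c := by
  rw [lexSupBelow_eq, if_neg h.not_gt]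

theorem toLex_le_lexSupBelow {A : Set (ι → V)} {γ : ι} {c : V} {f : ι → V} (hf : f ∈ A)
    (hfc : ∀ δ, γ ≤ δ → f δ = c) : toLex f ≤ toLex (lexSupBelow A γ c) := by
  refine not_lt.1 fun ⟨β, hagree, hlt⟩ => ?_
  by_cases hβ : β < γ
  · rw [Pi.toLex_apply, lexSupBelow_eq, if_pos hβ] at hlt
    exact hlt.not_ge (le_sSup ⟨f, ⟨hf, fun δ hδ => (hagree δ hδ).symm⟩, rfl⟩)
  · rw [Pi.toLex_apply, Pi.toLex_apply, lexSupBelow_of_le (not_lt.1 hβ), hfc β (not_lt.1 hβ)]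
      at hlt
    exact hlt.false

theorem lexSupBelow_le_toLex {A : Set (ι → V)} {γ : ι} {c : V} {g : ι → V}
    (hAg : ∀ f ∈ A, toLex f < toLex g) (hgc : ∀ δ, γ ≤ δ → g δ = c) :
    toLex (lexSupBelow A γ c) ≤ toLex g := by
  refine not_lt.1 fun ⟨β, hagree, hlt⟩ => ?_
  by_cases hβ : β < γ
  · rw [Pi.toLex_apply, Pi.toLex_apply, lexSupBelow_eq, if_pos hβ, lt_sSup_iff] at hlt
    obtain ⟨_, ⟨f, ⟨hf, hfx⟩, rfl⟩, hgf⟩ := hlt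
    exact (hAg f hf).not_gt ⟨β, fun δ hδ => (hagree δ hδ).trans (hfx δ hδ).symm, hgf⟩
  · rw [Pi.toLex_apply, Pi.toLex_apply, lexSupBelow_of_le (not_lt.1 hβ), hgc β (not_lt.1 hβ)]
      at hlt
    exact hlt.false

end LexSup

section Update

variable {ι : Type u} {V : Type*} [LinearOrder ι] [LinearOrder V]

theorem toLex_update_lt_of_lt {x y : ι → V} {γ : ι} (hxy : toLex x < toLex y)
    (heq : ∀ δ, γ ≤ δ → x δ = y δ) (v : V) : toLex (update x γ v) < toLex y := by
  obtain ⟨β, hagree, hlt⟩ := hxy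
  have hβ : β < γ := lt_of_not_ge fun h => hlt.ne (heq β h)
  refine ⟨β, fun δ hδ => ?_, ?_⟩ <;> simp only [Pi.toLex_apply] at *
  · rw [update_of_ne (hδ.trans hβ).ne, hagree δ hδ]
  · rwa [update_of_ne hβ.ne]

theorem lt_toLex_update_of_lt {x y : ι → V} {γ : ι} (hyx : toLex y < toLex x)
    (heq : ∀ δ, γ ≤ δ → x δ = y δ) (v : V) : toLex y < toLex (update x γ v) := by
  obtain ⟨β, hagree, hlt⟩ := hyx
  have hβ : β < γ := lt_of_not_ge fun h => hlt.ne' (heq β h)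
  refine ⟨β, fun δ hδ => ?_, ?_⟩ <;> simp only [Pi.toLex_apply] at *
  · rw [update_of_ne (hδ.trans hβ).ne, hagree δ hδ]
  · rwa [update_of_ne hβ.ne]

end Update

abbrev EventuallyConstLex (ι V : Type u) [LT ι] (c : V) : Type u :=
  {f : Lex (ι → V) // ∃ γ, ∀ δ, γ < δ → ofLex f δ = c}

theorem EventuallyConstLex.satDense {ι V : Type u} [LinearOrder ι] [WellFoundedLT ι]
    [CompleteLinearOrder V] {c : V} (hc₀ : ⊥ < c) (hc₁ : c < ⊤) {μ : Cardinal.{u}}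
    (hbdd : ∀ T : Set ι, #T ≤ μ → ∃ γ, ∀ β ∈ T, β < γ) :
    SatDense (EventuallyConstLex ι V c) μ := by
  have hbound : ∀ S : Set (EventuallyConstLex ι V c), #S ≤ μ →
      ∃ γ, ∀ f ∈ S, ∀ δ, γ ≤ δ → ofLex f.1 δ = c := by
    intro S hS
    choose γf hγf using fun f : EventuallyConstLex ι V c => f.2
    obtain ⟨γ, hγ⟩ := hbdd (γf '' S) (mk_image_le.trans hS)
    exact ⟨γ, fun f hf δ hδ => hγf f δ ((hγ _ (Set.mem_image_of_mem γf hf)).trans_le hδ)⟩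
  intro A B hA hB hAB
  obtain ⟨γA, hγA⟩ := hbound A hA
  obtain ⟨γB, hγB⟩ := hbound B hB
  set γ := max γA γB
  have hAc : ∀ f ∈ A, ∀ δ, γ ≤ δ → ofLex f.1 δ = c :=
    fun f hf δ hδ => hγA f hf δ (le_of_max_le_left hδ)
  have hBc : ∀ g ∈ B, ∀ δ, γ ≤ δ → ofLex g.1 δ = c :=
    fun g hg δ hδ => hγB g hg δ (le_of_max_le_right hδ)
  set x := lexSupBelow ((fun f => ofLex f.1) '' A) γ c
  have hx : ∀ δ, γ ≤ δ → x δ = c := fun δ hδ => lexSupBelow_of_le hδ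
  have hAx : ∀ f ∈ A, f.1 ≤ toLex x := fun f hf =>
    toLex_le_lexSupBelow ⟨f, hf, rfl⟩ (hAc f hf)
  have hxB : ∀ g ∈ B, toLex x ≤ g.1 := fun g hg =>
    lexSupBelow_le_toLex (by rintro _ ⟨f, hf, rfl⟩; exact hAB f hf g hg) (hBc g hg)
  classical
  let v : V :=
    if toLex x ∈ Subtype.val '' A then ⊤ else if toLex x ∈ Subtype.val '' B then ⊥ else c
  refine ⟨⟨toLex (update x γ v), γ, fun δ hδ => ?_⟩, fun f hf => ?_, fun g hg => ?_⟩
  · rw [ofLex_toLex, update_of_ne hδ.ne', hx δ hδ.le]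
  · rcases (hAx f hf).lt_or_eq with hlt | heq
    · exact lt_toLex_update_of_lt hlt
        (fun δ hδ => (hx δ hδ).trans (hAc f hf δ hδ).symm) v
    · change f.1 < toLex (update x γ v)
      rw [heq, Pi.lt_toLex_update_self_iff, hx γ le_rfl,
        show v = ⊤ from if_pos ⟨f, hf, heq⟩]
      exact hc₁
  · rcases (hxB g hg).lt_or_eq with hlt | heq
    · exact toLex_update_lt_of_lt hlt
        (fun δ hδ => (hx δ hδ).trans (hBc g hg δ hδ).symm) v
    · have hxA : toLex x ∉ Subtype.val '' A := by
        rintro ⟨f, hf, hfx⟩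
        exact (hAB f hf g hg).ne (Subtype.ext (hfx.trans heq))
      change toLex (update x γ v) < g.1
      rw [← heq, Pi.toLex_update_lt_self_iff, hx γ le_rfl,
        show v = ⊥ from (if_neg hxA).trans (if_pos ⟨g, hg, heq.symm⟩)]
      exact hc₀

theorem SatDense.lex_prod {L S : Type u} [CompleteLinearOrder L] [LinearOrder S]
    {μ : Cardinal.{u}} (hS : SatDense S μ) : SatDense (L ×ₗ S) μ := by
  intro A B hA hB hAB
  set m : L := ⨆ p ∈ A, (ofLex p).1
  have hAm : ∀ p ∈ A, (ofLex p).1 ≤ m := fun p hp =>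
    le_iSup₂ (f := fun p _ => (ofLex p).1) p hp
  have hmB : ∀ q ∈ B, m ≤ (ofLex q).1 := fun q hq =>
    iSup₂_le fun p hp => Prod.Lex.monotone_fst _ _ (hAB p hp q hq).le
  have hfibre : ∀ T : Set (L ×ₗ S), #T ≤ μ → #{s | toLex (m, s) ∈ T} ≤ μ := fun T hT =>
    (mk_preimage_of_injective _ T fun s t h => congrArg (fun p => (ofLex p).2) h).trans hT
  obtain ⟨t, hAt, htB⟩ := hS _ _ (hfibre A hA) (hfibre B hB) fun s hs s' hs' => by
    simpa using Prod.Lex.toLex_lt_toLex.1 (hAB _ hs _ hs')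
  refine ⟨toLex (m, t), fun p hp => ?_, fun q hq => ?_⟩
  · rcases (hAm p hp).lt_or_eq with h | h
    · exact Prod.Lex.lt_iff.2 (Or.inl h)
    · refine Prod.Lex.lt_iff.2 (Or.inr ⟨h, hAt _ ?_⟩)
      rw [Set.mem_ofPred_eq, ← h]
      exact hp
  · rcases (hmB q hq).lt_or_eq with h | h
    · exact Prod.Lex.lt_iff.2 (Or.inl h)
    · refine Prod.Lex.lt_iff.2 (Or.inr ⟨h, htB _ ?_⟩)
      rw [Set.mem_ofPred_eq, h]
      exact hq

theorem exists_wellOrder_forall_bounded (μ : Cardinal.{u}) :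
    ∃ (ι : Type u) (_ : LinearOrder ι) (_ : WellFoundedLT ι),
      ∀ T : Set ι, #T ≤ μ → ∃ γ, ∀ β ∈ T, β < γ := by
  set ν := Order.succ (max μ ℵ₀)
  refine ⟨ν.ord.ToType, inferInstance, inferInstance, fun T hT => ?_⟩
  by_contra! hcofinal
  have hνT : ν ≤ #T :=
    calc ν = Order.cof ν.ord.ToType := by
          rw [Ordinal.cof_toType, (isRegular_succ (le_max_right μ ℵ₀)).cof_ord]
      _ ≤ #T := Order.cof_le hcofinal
  exact ((hT.trans (le_max_left μ ℵ₀)).trans_lt (Order.lt_succ _)).not_ge hνT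

theorem exists_orderEmbedding_satDense (X : Type u) [LinearOrder X] (μ : Cardinal.{u}) :
    ∃ (M : Type u) (_ : LinearOrder M), SatDense M μ ∧ Nonempty (X ↪o M) := by
  obtain ⟨ι, _, _, hbdd⟩ := exists_wellOrder_forall_bounded μ
  let c : WithBot (WithTop PUnit.{u + 1}) := ((PUnit.unit : WithTop _) : WithBot _)
  have hS : SatDense (EventuallyConstLex ι _ c) μ :=
    EventuallyConstLex.satDense (WithBot.bot_lt_coe _)
      (WithBot.coe_lt_coe.2 (WithTop.coe_lt_top _)) hbdd
  obtain ⟨s₀, -⟩ := hS ∅ ∅ (by simp) (by simp) (by simp)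
  exact ⟨LowerSet X ×ₗ EventuallyConstLex ι _ c, inferInstance, hS.lex_prod,
    ⟨OrderEmbedding.ofStrictMono (fun x => toLex (LowerSet.Iic x, s₀)) fun _ _ h =>
      Prod.Lex.toLex_lt_toLex.2 (Or.inl (LowerSet.Iic_strictMono X h))⟩⟩

namespace InS

variable {κ N : Type u} [LinearOrder N] {D : Ultrafilter κ} {a : N → N → Set κ}

theorem notMem_self (ha : InS D a) (i : κ) (s : N) : i ∉ a s s := by
  simp [ha.1 s]

theorem mem_or_mem (ha : InS D a) (i : κ) {s t : N} (hst : s ≠ t) :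
    i ∈ a s t ∨ i ∈ a t s := by
  rw [ha.2.1 s t hst]
  exact (em (i ∈ a t s)).symm

theorem notMem_of_mem (ha : InS D a) {i : κ} {s t : N} (h : i ∈ a s t) : i ∉ a t s := by
  have hst : s ≠ t := by rintro rfl; exact ha.notMem_self i s h
  rw [ha.2.1 t s hst.symm]
  exact not_not_intro h

theorem false_of_mem_cycle (ha : InS D a) {i : κ} {s t u : N} (hst : s < t) (hsu : s < u)
    (h₁ : i ∈ a s t) (h₂ : i ∈ a t u) (h₃ : i ∈ a u s) : False := by
  rcases lt_trichotomy t u with htu | rfl | hut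
  · exact ha.notMem_of_mem h₃ ((ha.2.2.2 s t u hst htu).1 ⟨h₁, h₂⟩)
  · exact ha.notMem_self i t h₂
  · exact ha.notMem_of_mem h₁ ((ha.2.2.2 s u t hsu hut).2 ⟨h₂, h₃⟩)

theorem mem_trans (ha : InS D a) {i : κ} {s t u : N} (hst : i ∈ a s t) (htu : i ∈ a t u) :
    i ∈ a s u := by
  have hne₁ : s ≠ t := by rintro rfl; exact ha.notMem_self i s hst
  have hne₂ : t ≠ u := by rintro rfl; exact ha.notMem_self i t htu
  have hne₃ : s ≠ u := by rintro rfl; exact ha.notMem_of_mem hst htu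
  by_contra hsu
  have hus : i ∈ a u s := (ha.mem_or_mem i hne₃).resolve_left hsu
  -- rotate the cycle `s → t → u → s` so that it starts at its least element
  rcases hne₁.lt_or_gt with h₁ | h₁ <;> rcases hne₂.lt_or_gt with h₂ | h₂ <;>
    rcases hne₃.lt_or_gt with h₃ | h₃
  all_goals first
    | exact ha.false_of_mem_cycle ‹s < t› ‹s < u› hst htu hus
    | exact ha.false_of_mem_cycle ‹t < u› ‹t < s› htu hus hst
    | exact ha.false_of_mem_cycle ‹u < s› ‹u < t› hus hst htu
    | order

end InS

def Fibre {κ N : Type u} (_a : N → N → Set κ) (_i : κ) : Type u := N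

@[reducible]
noncomputable def InS.fibreLinearOrder {κ N : Type u} [LinearOrder N] {D : Ultrafilter κ}
    {a : N → N → Set κ} (ha : InS D a) (i : κ) : LinearOrder (Fibre a i) :=
  haveI : IsStrictTotalOrder N (fun s t => i ∈ a s t) :=
    { trichotomous := fun _ _ hst hts =>
        by_contra fun hne => (ha.mem_or_mem i hne).elim hst hts
      irrefl := ha.notMem_self i
      trans := fun _ _ _ => ha.mem_trans }
  open Classical in linearOrderOfSTO (α := N) fun s t => i ∈ a s t

theorem exists_representation_general
    {κ : Type u} (D : Ultrafilter κ)
    {l₁ l₂ : Cardinal.{u}}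
    (N : Type u) [LinearOrder N]
    (a : N → N → Set κ) (ha : InS D a) :
    ∃ (M : Type u) (_ : LinearOrder M), SatDense M (l₁ + l₂) ∧
      ∃ f : N → κ → M,
        (∀ s t : N, s < t → a s t = {i | f s i < f t i}) ∧
        (∀ s t : N, s ≠ t → Disjoint (Set.range (f s)) (Set.range (f t))) := by
  -- any linear order on `κ` would do
  let : LinearOrder κ := IsWellOrder.linearOrder WellOrderingRel
  let := ha.fibreLinearOrder
  obtain ⟨M, _, hM, ⟨e⟩⟩ := exists_orderEmbedding_satDense (Σₗ i, Fibre a i) (l₁ + l₂)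
  refine ⟨M, inferInstance, hM, fun s i => e (toLex ⟨i, s⟩), fun s t _ => ?_,
    fun s t hst => ?_⟩
  · ext i
    rw [Set.mem_ofPred_eq, e.lt_iff_lt]
    exact ⟨fun h => Sigma.Lex.right _ _ h, fun h => by
      cases h with
      | left _ _ h => exact absurd h (lt_irrefl i)
      | right _ _ h => exact h⟩
  · rw [Set.disjoint_left]
    rintro _ ⟨i, rfl⟩ ⟨j, hj⟩
    exact hst (eq_of_heq (Sigma.mk.inj_iff.1 (e.injective hj)).2).symm

/-- For every `ā ∈ S_c` there are a `(l₁+l₂)⁺`-saturated dense linear order `M` and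
functions `f s : κ → M` (`s ∈ N`) with pairwise disjoint ranges such that
`a s t = {i < κ : f s i < f t i}` whenever `s < t` in `N`. -/
theorem exists_representation
    {κ : Type u} [Infinite κ] (D : Ultrafilter κ)
    (huniform : ∀ A : Set κ, A ∈ D → Cardinal.mk A = Cardinal.mk κ)
    {l₁ l₂ : Cardinal.{u}} (hreg₁ : l₁.IsRegular) (hreg₂ : l₂.IsRegular)
    (hκ₁ : Cardinal.mk κ < l₁) (hκ₂ : Cardinal.mk κ < l₂)
    (N : Type u) [LinearOrder N] (N₁ : Set N)
    (hinit : ∀ x ∈ N₁, ∀ y, y ≤ x → y ∈ N₁)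
    (hcard : Cardinal.mk N ≤ Cardinal.powerlt 2 l₁ + Cardinal.powerlt 2 l₂)
    (hcof : cofinality N₁ = l₁) (hcoin : coinitiality N₁ᶜ = l₂)
    (hsat₁ : SatDenseOn N₁ (min l₁ l₂)) (hsat₂ : SatDenseOn N₁ᶜ (min l₁ l₂))
    (a : N → N → Set κ) (ha : InS D a) :
    ∃ (M : Type u) (_ : LinearOrder M), SatDense M (l₁ + l₂) ∧
      ∃ f : N → κ → M,
        (∀ s t : N, s < t → a s t = {i | f s i < f t i}) ∧
        (∀ s t : N, s ≠ t → Disjoint (Set.range (f s)) (Set.range (f t))) :=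
  exists_representation_general D N a ha
end

section
/- Let κ be an infinite cardinal, let D be a uniform ultrafilter on κ, let λ1 and λ2 be regular cardinals greater than κ, let N = N1 + N2 be a linear order as in the context, and let ā = ⟨a_{s,t} : s, t ∈ N⟩ ∈ S_c. Suppose M is a (λ1+λ2)⁺-saturated dense linear order and f_s : κ → M (s ∈ N) are functions with pairwise disjoint ranges such that a_{s,t} = {i < κ : f_s(i) < f_t(i)} whenever s < t in N. Then ā is c-solvable if and only if there exists g : κ → M such that in the ultrapower M^κ/D we have f_s/D < g/D < f_t/D for every s ∈ N1 and t ∈ N2. -/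
universe u

open Set

/-!
A solution `b̄` places the new point `s⁎` coordinatewise: transitivity of `ā¹` through `s⁎`
gives `f s i < f t i` whenever `s ∈ N₁`, `i ∈ b s`, `t ∉ N₁`, `i ∉ b t`. Restricting `s` to a
cofinal subset of `N₁` of size `l₁` and `t` to a coinitial subset of `N₂` of size `l₂`,
saturation of `M` puts some `g i` between these values, and `g / D` realizes the cut because
`s ↦ f s / D` is increasing. Conversely, with `b s = {i | f s i < g i}` on `N₁` and
`b t = {i | f t i ≤ g i}` on `N₂`, the family `ā¹` is represented on `N⁺` by `f` extended by `g`
at `s⁎`, and any family represented by functions into a linear order satisfies the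
transitivity conditions (iv).
-/

open Filter

section Cofinality

variable {I : Type u} [LinearOrder I]

theorem exists_cofinal_subset_mk_eq_cofinality (J : Set I) :
    ∃ S ⊆ J, (∀ x ∈ J, ∃ y ∈ S, x ≤ y) ∧ Cardinal.mk S = cofinality J := by
  have hne : {c | ∃ S : Set I, S ⊆ J ∧ (∀ x ∈ J, ∃ y ∈ S, x ≤ y) ∧ Cardinal.mk S = c}.Nonempty :=
    ⟨_, J, subset_rfl, fun x hx => ⟨x, hx, le_rfl⟩, rfl⟩
  exact csInf_mem hne

theorem exists_coinitial_subset_mk_eq_coinitiality (J : Set I) :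
    ∃ S ⊆ J, (∀ x ∈ J, ∃ y ∈ S, y ≤ x) ∧ Cardinal.mk S = coinitiality J :=
  exists_cofinal_subset_mk_eq_cofinality (I := Iᵒᵈ) J

theorem cofinality_empty : cofinality (∅ : Set I) = 0 :=
  nonpos_iff_eq_zero.1 (csInf_le' ⟨∅, subset_rfl, by simp, by simp⟩)

theorem Set.Nonempty.of_cofinality_ne_zero {J : Set I} (h : cofinality J ≠ 0) : J.Nonempty :=
  nonempty_iff_ne_empty.2 fun hJ => h (hJ ▸ cofinality_empty)

theorem Set.Nonempty.of_coinitiality_ne_zero {J : Set I} (h : coinitiality J ≠ 0) :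
    J.Nonempty :=
  Set.Nonempty.of_cofinality_ne_zero (I := Iᵒᵈ) h

theorem IsLowerSet.lt_of_mem_of_notMem {J : Set I} (hJ : IsLowerSet J) {s t : I} (hs : s ∈ J)
    (ht : t ∉ J) : s < t :=
  lt_of_not_ge fun hts => ht (hJ hts hs)

end Cofinality

theorem SatDense.exists_between_image {M ι : Type u} [LinearOrder M] {μ : Cardinal.{u}}
    (hM : SatDense M μ) {S T : Set ι} (hS : Cardinal.mk S ≤ μ) (hT : Cardinal.mk T ≤ μ)
    (u v : ι → M) (huv : ∀ s ∈ S, ∀ t ∈ T, u s < v t) :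
    ∃ x, (∀ s ∈ S, u s < x) ∧ ∀ t ∈ T, x < v t := by
  simpa only [forall_mem_image] using
    hM (u '' S) (v '' T) (Cardinal.mk_image_le.trans hS) (Cardinal.mk_image_le.trans hT)
      (by simpa only [forall_mem_image] using huv)

section Represented

variable {κ P M : Type*} [LinearOrder M] {r : P → P → Prop} {A : P → P → Set κ}
  {F : P → κ → M}

theorem inter_subset_of_eq_setOf_lt (hirr : ∀ p, ¬r p p)
    (htrans : ∀ {p q s}, r p q → r q s → r p s)
    (hA : ∀ p q, p ≠ q → A p q = (A q p)ᶜ) (hF : ∀ p q, r p q → A p q = {i | F p i < F q i}) :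
    ∀ p₁ p₂ p₃, r p₁ p₂ → r p₂ p₃ →
      A p₁ p₂ ∩ A p₂ p₃ ⊆ A p₁ p₃ ∧ A p₃ p₂ ∩ A p₂ p₁ ⊆ A p₃ p₁ := by
  intro p₁ p₂ p₃ h₁₂ h₂₃
  have h₁₃ := htrans h₁₂ h₂₃
  have hne : ∀ {p q}, r p q → q ≠ p := fun h e => hirr _ (e ▸ h)
  rw [hA p₃ p₂ (hne h₂₃), hA p₂ p₁ (hne h₁₂), hA p₃ p₁ (hne h₁₃), hF _ _ h₁₂, hF _ _ h₂₃,
    hF _ _ h₁₃]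
  exact ⟨fun i hi => hi.1.trans hi.2, fun i hi h₁₃ => hi.2 (h₁₃.trans_le (not_lt.1 hi.1))⟩

end Represented

section Extension

variable {κ N : Type u} {a : N → N → Set κ} {b : N → Set κ}

theorem aExt_self (ha : ∀ s, a s s = ∅) : ∀ p, aExt a b p p = ∅
  | .inl s => ha s
  | .inr _ => rfl

theorem aExt_eq_compl (ha : ∀ s t, s ≠ t → a s t = (a t s)ᶜ) :
    ∀ p q, p ≠ q → aExt a b p q = (aExt a b q p)ᶜ
  | .inl s, .inl t, h => ha s t fun e => h (congrArg _ e)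
  | .inl _, .inr _, _ => (compl_compl _).symm
  | .inr _, .inl _, _ => rfl
  | .inr _, .inr _, h => (h rfl).elim

end Extension

section Cut

variable {κ N M : Type u} [LinearOrder N] [LinearOrder M] {D : Ultrafilter κ} {N₁ : Set N}
  {a : N → N → Set κ} {b : N → Set κ} {f : N → κ → M}

theorem strictMono_germ (ha : ∀ s t, s < t → a s t ∈ (D : Filter κ))
    (hrep : ∀ s t, s < t → a s t = {i | f s i < f t i}) :
    StrictMono fun s => (f s : (D : Filter κ).Germ M) := fun s t hst => by
  have hst' := ha s t hst
  rw [hrep s t hst] at hst'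
  exact Germ.coe_lt.2 hst'

theorem ltPlus_irrefl : ∀ p, ¬ltPlus N₁ p p
  | .inl s => lt_irrefl s
  | .inr _ => id

theorem ltPlus_trans (hN₁ : IsLowerSet N₁) :
    ∀ {p q r}, ltPlus N₁ p q → ltPlus N₁ q r → ltPlus N₁ p r
  | .inl _, .inl _, .inl _, h₁, h₂ => lt_trans h₁ h₂
  | .inl _, .inl _, .inr _, h₁, h₂ => hN₁ h₁.le h₂
  | .inl _, .inr _, .inl _, h₁, h₂ => hN₁.lt_of_mem_of_notMem h₁ h₂
  | .inr _, .inl _, .inl _, h₁, h₂ => fun h₃ => h₁ (hN₁ h₂.le h₃)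
  | .inr _, .inl _, .inr _, h₁, h₂ => (h₁ h₂).elim
  | _, .inr _, .inr _, _, h₂ => h₂.elim
  | .inr _, .inr _, _, h₁, _ => h₁.elim

theorem IsSolution.mem_of_mem (hb : IsSolution D N₁ a b) {s : N} (hs : s ∈ N₁) :
    b s ∈ (D : Filter κ) :=
  hb.2.2.1 (.inl s) (.inr ()) hs

theorem IsSolution.compl_mem_of_notMem (hb : IsSolution D N₁ a b) {t : N} (ht : t ∉ N₁) :
    (b t)ᶜ ∈ (D : Filter κ) :=
  hb.2.2.1 (.inr ()) (.inl t) ht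

theorem IsSolution.inter_compl_subset (hb : IsSolution D N₁ a b) {s t : N} (hs : s ∈ N₁)
    (ht : t ∉ N₁) : b s ∩ (b t)ᶜ ⊆ a s t :=
  (hb.2.2.2 (.inl s) (.inr ()) (.inl t) hs ht).1

theorem IsSolution.exists_germ_between {μ : Cardinal.{u}} (hM : SatDense M μ) {S T : Set N}
    (hSN : S ⊆ N₁) (hTN : T ⊆ N₁ᶜ) (hS : Cardinal.mk S ≤ μ) (hT : Cardinal.mk T ≤ μ)
    (hN₁ : IsLowerSet N₁) (hrep : ∀ s t, s < t → a s t = {i | f s i < f t i})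
    (hb : IsSolution D N₁ a b) :
    ∃ g : κ → M, (∀ s ∈ S, (f s : (D : Filter κ).Germ M) < g) ∧
      ∀ t ∈ T, (g : (D : Filter κ).Germ M) < f t := by
  have hsep : ∀ i, ∀ s ∈ {s ∈ S | i ∈ b s}, ∀ t ∈ {t ∈ T | i ∉ b t}, f s i < f t i := by
    rintro i s ⟨hsS, hsi⟩ t ⟨htT, hti⟩
    have hst := hN₁.lt_of_mem_of_notMem (hSN hsS) (hTN htT)
    have hmem := hb.inter_compl_subset (hSN hsS) (hTN htT) ⟨hsi, hti⟩
    rwa [hrep s t hst] at hmem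
  choose g hgS hgT using fun i =>
    hM.exists_between_image ((Cardinal.mk_le_mk_of_subset (sep_subset _ _)).trans hS)
      ((Cardinal.mk_le_mk_of_subset (sep_subset _ _)).trans hT) (fun s => f s i)
      (fun t => f t i) (hsep i)
  refine ⟨g, fun s hs => ?_, fun t ht => ?_⟩
  · exact Germ.coe_lt.2 (mem_of_superset (hb.mem_of_mem (hSN hs)) fun i hi => hgS i s ⟨hs, hi⟩)
  · exact Germ.coe_lt.2
      (mem_of_superset (hb.compl_mem_of_notMem (hTN ht)) fun i hi => hgT i t ⟨ht, hi⟩)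

theorem Solvable.exists_germ_between {μ : Cardinal.{u}} (hM : SatDense M μ)
    (hcof : cofinality N₁ ≤ μ) (hcoin : coinitiality N₁ᶜ ≤ μ) (hN₁ : IsLowerSet N₁)
    (ha : ∀ s t, s < t → a s t ∈ (D : Filter κ))
    (hrep : ∀ s t, s < t → a s t = {i | f s i < f t i}) (h : Solvable D N₁ a) :
    ∃ g : κ → M, ∀ s ∈ N₁, ∀ t ∈ N₁ᶜ,
      (f s : (D : Filter κ).Germ M) < g ∧ (g : (D : Filter κ).Germ M) < f t := by
  obtain ⟨b, hb⟩ := h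
  obtain ⟨S, hSN, hS, hSμ⟩ := exists_cofinal_subset_mk_eq_cofinality N₁
  obtain ⟨T, hTN, hT, hTμ⟩ := exists_coinitial_subset_mk_eq_coinitiality N₁ᶜ
  obtain ⟨g, hSg, hgT⟩ :=
    hb.exists_germ_between hM hSN hTN (hSμ.trans_le hcof) (hTμ.trans_le hcoin) hN₁ hrep
  have hmono := (strictMono_germ ha hrep).monotone
  refine ⟨g, fun s hs t ht => ⟨?_, ?_⟩⟩
  · obtain ⟨s', hs', hss'⟩ := hS s hs
    exact (hmono hss').trans_lt (hSg s' hs')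
  · obtain ⟨t', ht', ht't⟩ := hT t ht
    exact (hgT t' ht').trans_le (hmono ht't)

theorem solvable_of_germ_between (hN₁ : IsLowerSet N₁) (hne₁ : N₁.Nonempty)
    (hne₂ : N₁ᶜ.Nonempty) (ha : InS D a) (hrep : ∀ s t, s < t → a s t = {i | f s i < f t i})
    (g : κ → M) (hg : ∀ s ∈ N₁, ∀ t ∈ N₁ᶜ,
      (f s : (D : Filter κ).Germ M) < g ∧ (g : (D : Filter κ).Germ M) < f t) :
    Solvable D N₁ a := by
  classical
  let b : N → Set κ := fun s => if s ∈ N₁ then {i | f s i < g i} else {i | g i < f s i}ᶜ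
  let F : N ⊕ Unit → κ → M := Sum.elim f fun _ => g
  have hF : ∀ p q, ltPlus N₁ p q → aExt a b p q = {i | F p i < F q i} := by
    rintro (s | ⟨⟩) (t | ⟨⟩) h
    · exact hrep s t h
    · exact if_pos h
    · exact (congrArg compl (if_neg h)).trans (compl_compl _)
    · exact h.elim
  have hFmono : ∀ p q, ltPlus N₁ p q → (F p : (D : Filter κ).Germ M) < F q := by
    rintro (s | ⟨⟩) (t | ⟨⟩) h
    · exact strictMono_germ ha.2.2.1 hrep h
    · exact (hg s h _ hne₂.some_mem).1
    · exact (hg _ hne₁.some_mem t h).2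
    · exact h.elim
  refine ⟨b, aExt_self ha.1, aExt_eq_compl ha.2.1, fun p q h => ?_,
    inter_subset_of_eq_setOf_lt ltPlus_irrefl (ltPlus_trans hN₁) (aExt_eq_compl ha.2.1) hF⟩
  rw [hF p q h]
  exact Germ.coe_lt.1 (hFmono p q h)

end Cut

theorem solvable_iff_realized_general
    {κ : Type u} (D : Ultrafilter κ)
    {l₁ l₂ : Cardinal.{u}} (hreg₁ : l₁.IsRegular) (hreg₂ : l₂.IsRegular)
    (N : Type u) [LinearOrder N] (N₁ : Set N)
    (hinit : ∀ x ∈ N₁, ∀ y, y ≤ x → y ∈ N₁)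
    (hcof : cofinality N₁ = l₁) (hcoin : coinitiality N₁ᶜ = l₂)
    (a : N → N → Set κ) (ha : InS D a)
    (M : Type u) [LinearOrder M] (hM : SatDense M (l₁ + l₂))
    (f : N → κ → M)
    (hrep : ∀ s t : N, s < t → a s t = {i | f s i < f t i}) :
    Solvable D N₁ a ↔
      ∃ g : κ → M, ∀ s ∈ N₁, ∀ t ∈ N₁ᶜ,
        (f s : Filter.Germ (D : Filter κ) M) < (g : Filter.Germ (D : Filter κ) M) ∧
        (g : Filter.Germ (D : Filter κ) M) < (f t : Filter.Germ (D : Filter κ) M) := by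
  have hN₁ : IsLowerSet N₁ := fun x y hyx hx => hinit x hx y hyx
  constructor
  · exact Solvable.exists_germ_between hM (hcof.trans_le le_self_add)
      (hcoin.trans_le le_add_self) hN₁ ha.2.2.1 hrep
  · rintro ⟨g, hg⟩
    have hne₁ := Set.Nonempty.of_cofinality_ne_zero (hcof ▸ hreg₁.pos.ne')
    have hne₂ := Set.Nonempty.of_coinitiality_ne_zero (hcoin ▸ hreg₂.pos.ne')
    exact solvable_of_germ_between hN₁ hne₁ hne₂ ha hrep g hg

/-- Suppose `M` is a `(l₁+l₂)⁺`-saturated dense linear order and `f s : κ → M`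
(`s ∈ N`) have pairwise disjoint ranges and represent `ā ∈ S_c`, i.e.
`a s t = {i : f s i < f t i}` for `s < t`. Then `ā` is `c`-solvable iff some
`g : κ → M` satisfies `f s /D < g/D < f t /D` in `M^κ/D` for all `s ∈ N₁`, `t ∈ N₂`. -/
theorem solvable_iff_realized
    {κ : Type u} [Infinite κ] (D : Ultrafilter κ)
    (huniform : ∀ A : Set κ, A ∈ D → Cardinal.mk A = Cardinal.mk κ)
    {l₁ l₂ : Cardinal.{u}} (hreg₁ : l₁.IsRegular) (hreg₂ : l₂.IsRegular)
    (hκ₁ : Cardinal.mk κ < l₁) (hκ₂ : Cardinal.mk κ < l₂)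
    (N : Type u) [LinearOrder N] (N₁ : Set N)
    (hinit : ∀ x ∈ N₁, ∀ y, y ≤ x → y ∈ N₁)
    (hcard : Cardinal.mk N ≤ Cardinal.powerlt 2 l₁ + Cardinal.powerlt 2 l₂)
    (hcof : cofinality N₁ = l₁) (hcoin : coinitiality N₁ᶜ = l₂)
    (hsat₁ : SatDenseOn N₁ (min l₁ l₂)) (hsat₂ : SatDenseOn N₁ᶜ (min l₁ l₂))
    (a : N → N → Set κ) (ha : InS D a)
    (M : Type u) [LinearOrder M] (hM : SatDense M (l₁ + l₂))
    (f : N → κ → M)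
    (hrep : ∀ s t : N, s < t → a s t = {i | f s i < f t i})
    (hdisj : ∀ s t : N, s ≠ t → Disjoint (Set.range (f s)) (Set.range (f t))) :
    Solvable D N₁ a ↔
      ∃ g : κ → M, ∀ s ∈ N₁, ∀ t ∈ N₁ᶜ,
        (f s : Filter.Germ (D : Filter κ) M) < (g : Filter.Germ (D : Filter κ) M) ∧
        (g : Filter.Germ (D : Filter κ) M) < (f t : Filter.Germ (D : Filter κ) M) :=
  solvable_iff_realized_general D hreg₁ hreg₂ N N₁ hinit hcof hcoin a ha M hM f hrep
end

section
/- Let κ be an infinite cardinal, let D be an ultrafilter on κ, let μ be an infinite cardinal, and let J be a μ⁺-saturated dense linear order. Then the ultrapower J^κ/D has no internal cut of cofinality (λ1, λ2) with λ1 ≤ μ and λ2 ≤ μ; that is, every internal cut (J1, J2) of J^κ/D satisfies: the least cardinality of a cofinal subset of J1 exceeds μ, or the least cardinality of a coinitial subset of J2 exceeds μ. -/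
universe u

open Set

/-- The cut `(J₁, J₂)` of the ultrapower `J^κ/D` is internal: for each `i < κ` there is
a partition of `J` into an initial segment `P i` and its (final-segment) complement
such that `J₁ = ∏ (P i) / D` and `J₂ = ∏ (P i)ᶜ / D`. -/
def IsInternalCutGerm {κ : Type u} (D : Ultrafilter κ) (J : Type u) [LinearOrder J]
    (J₁ J₂ : Set (Filter.Germ (D : Filter κ) J)) : Prop :=
  ∃ P : κ → Set J,
    (∀ i, ∀ x ∈ P i, ∀ y, y ≤ x → y ∈ P i) ∧
    J₁ = {x | ∃ f : κ → J, x = (f : Filter.Germ (D : Filter κ) J) ∧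
            {i | f i ∈ P i} ∈ (D : Filter κ)} ∧
    J₂ = {x | ∃ f : κ → J, x = (f : Filter.Germ (D : Filter κ) J) ∧
            {i | f i ∉ P i} ∈ (D : Filter κ)}

/-!
Suppose both sides of an internal cut `(∏ Pᵢ / D, ∏ Pᵢᶜ / D)` had cofinality `≤ μ`, witnessed
by sets `S` and `T` of germs. Fixing representatives, in each coordinate `i` at most `μ` values
of the representatives of `S` fall into the initial segment `Pᵢ` and at most `μ` values of those
of `T` fall into its complement; saturation of `J` puts a point `xᵢ` strictly between them. The
germ of `x` then lies above `S` and below `T`, so it belongs to neither side of the cut.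
-/

open Filter Cardinal

section CutCofinality

variable {I : Type u} [LinearOrder I]

theorem exists_cofinal_mk_eq_cofinality (J : Set I) :
    ∃ S ⊆ J, (∀ x ∈ J, ∃ y ∈ S, x ≤ y) ∧ #S = cofinality J :=
  csInf_mem (s := {c | ∃ S ⊆ J, (∀ x ∈ J, ∃ y ∈ S, x ≤ y) ∧ #S = c})
    ⟨#J, J, subset_rfl, fun x hx => ⟨x, hx, le_rfl⟩, rfl⟩

theorem exists_coinitial_mk_eq_coinitiality (J : Set I) :
    ∃ S ⊆ J, (∀ x ∈ J, ∃ y ∈ S, y ≤ x) ∧ #S = coinitiality J :=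
  csInf_mem (s := {c | ∃ S ⊆ J, (∀ x ∈ J, ∃ y ∈ S, y ≤ x) ∧ #S = c})
    ⟨#J, J, subset_rfl, fun x hx => ⟨x, hx, le_rfl⟩, rfl⟩

end CutCofinality

namespace SatDense

variable {J : Type u} [LinearOrder J] {μ : Cardinal.{u}}

theorem exists_between_of_isLowerSet (hJ : SatDense J μ) {P : Set J} (hP : IsLowerSet P)
    {A B : Set J} (hA : #A ≤ μ) (hB : #B ≤ μ) :
    ∃ x, (∀ a ∈ A ∩ P, a < x) ∧ ∀ b ∈ B \ P, x < b := by
  refine hJ _ _ ((mk_le_mk_of_subset inter_subset_left).trans hA)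
    ((mk_le_mk_of_subset sdiff_subset).trans hB) ?_
  rintro a ⟨-, haP⟩ b ⟨-, hbP⟩
  by_contra! hba
  exact hbP (hP hba haP)

theorem exists_germ_between {κ : Type u} {D : Ultrafilter κ} (hJ : SatDense J μ)
    {J₁ J₂ : Set (Germ (D : Filter κ) J)} (hint : IsInternalCutGerm D J J₁ J₂)
    {S T : Set (Germ (D : Filter κ) J)} (hS₁ : S ⊆ J₁) (hT₂ : T ⊆ J₂)
    (hS : #S ≤ μ) (hT : #T ≤ μ) :
    ∃ x : Germ (D : Filter κ) J, (∀ s ∈ S, s < x) ∧ ∀ t ∈ T, x < t := by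
  obtain ⟨P, hP, rfl, rfl⟩ := hint
  choose F hF hFP using fun s : S => hS₁ s.2
  choose G hG hGP using fun t : T => hT₂ t.2
  choose x hxF hxG using fun i =>
    hJ.exists_between_of_isLowerSet (fun a b hba ha => hP i a ha b hba)
      (mk_range_le.trans hS : #(range (F · i)) ≤ μ)
      (mk_range_le.trans hT : #(range (G · i)) ≤ μ)
  refine ⟨x, fun s hs => ?_, fun t ht => ?_⟩
  · rw [show s = F ⟨s, hs⟩ from hF ⟨s, hs⟩, Germ.coe_lt]
    filter_upwards [hFP ⟨s, hs⟩] with i hi using hxF i _ ⟨mem_range_self _, hi⟩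
  · rw [show t = G ⟨t, ht⟩ from hG ⟨t, ht⟩, Germ.coe_lt]
    filter_upwards [hGP ⟨t, ht⟩] with i hi using hxG i _ ⟨mem_range_self _, hi⟩

end SatDense

theorem no_small_internal_cut_of_saturated_general
    {κ : Type u} (D : Ultrafilter κ)
    {μ : Cardinal.{u}}
    (J : Type u) [LinearOrder J] (hJ : SatDense J μ)
    (J₁ J₂ : Set (Filter.Germ (D : Filter κ) J))
    (hcut : IsCut J₁ J₂) (hint : IsInternalCutGerm D J J₁ J₂) :
    μ < cofinality J₁ ∨ μ < coinitiality J₂ := by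
  by_contra! hsmall
  obtain ⟨S, hS₁, hS_cofinal, hS_card⟩ := exists_cofinal_mk_eq_cofinality J₁
  obtain ⟨T, hT₂, hT_coinitial, hT_card⟩ := exists_coinitial_mk_eq_coinitiality J₂
  obtain ⟨x, hSx, hxT⟩ := hJ.exists_germ_between hint hS₁ hT₂
    (hS_card ▸ hsmall.1) (hT_card ▸ hsmall.2)
  have hx : x ∈ J₁ ∪ J₂ := hcut.2.2.1 ▸ mem_univ x
  rcases hx with hx₁ | hx₂
  · obtain ⟨s, hs, hxs⟩ := hS_cofinal x hx₁
    exact (hSx s hs).not_ge hxs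
  · obtain ⟨t, ht, htx⟩ := hT_coinitial x hx₂
    exact (hxT t ht).not_ge htx

/-- If `J` is a `μ⁺`-saturated dense linear order, `μ` infinite, then the ultrapower
`J^κ/D` has no internal cut of cofinality `(l₁, l₂)` with `l₁, l₂ ≤ μ`: every internal
cut `(J₁, J₂)` has cofinality `> μ` on one of its two sides. -/
theorem no_small_internal_cut_of_saturated
    {κ : Type u} [Infinite κ] (D : Ultrafilter κ)
    {μ : Cardinal.{u}} (hμ : Cardinal.aleph0 ≤ μ)
    (J : Type u) [LinearOrder J] (hJ : SatDense J μ)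
    (J₁ J₂ : Set (Filter.Germ (D : Filter κ) J))
    (hcut : IsCut J₁ J₂) (hint : IsInternalCutGerm D J J₁ J₂) :
    μ < cofinality J₁ ∨ μ < coinitiality J₂ :=
  no_small_internal_cut_of_saturated_general D J hJ J₁ J₂ hcut hint
end

section
/- Let κ be an infinite cardinal and let D be an ultrafilter on κ. Then there is no sequence ⟨f_ξ : ξ < (2^κ)⁺⟩ of functions from κ to the ordinals such that for all ξ < ζ < (2^κ)⁺, the set {i < κ : f_ζ(i) < f_ξ(i)} belongs to D. In other words, the order <_D on ordinal-valued functions on κ, defined by f <_D g iff {i < κ : f(i) < g(i)} ∈ D, admits no strictly decreasing chain of length (2^κ)⁺. -/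
universe u

/-!
Pick `c ξ ζ := i` with `f ζ i < f ξ i` for `ξ < ζ`. An increasing `ω`-sequence `s` on which `c` is
constant with value `i` makes `f (s n) i` a strictly decreasing sequence of ordinals, so it
suffices to prove the partition relation `(2^κ)⁺ → (ω)²_κ`. This is the Erdős–Rado tree argument:
for each point `a` follow the canonical branch towards `a` for `κ⁺` steps. If the branch never
reaches `a`, it is increasing and end-homogeneous, and pigeonhole on its `κ⁺` end colours gives
the monochromatic sequence. If every branch reaches its target, then `a` is determined by the
length of its branch and the colours along it, which leaves room for at most
`Σ_{β < κ⁺} κ^|β| = 2^κ` points.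
-/

open Cardinal Set

theorem Infinite.exists_strictMono_of_wellFoundedLT (α : Type*) [LinearOrder α]
    [WellFoundedLT α] [Infinite α] : ∃ f : ℕ → α, StrictMono f := by
  obtain ⟨f, hf | hf⟩ := Infinite.exists_strictMono_or_strictAnti α
  exacts [⟨f, hf⟩, (not_strictAnti_of_wellFoundedLT f hf).elim]

theorem Cardinal.mk_sigma_arrow_le {ι K : Type u} [Infinite K] (s : ι → Type u)
    (hι : #ι ≤ 2 ^ #K) (hs : ∀ i, #(s i) ≤ #K) : #(Σ i, s i → K) ≤ 2 ^ #K :=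
  calc #(Σ i, s i → K) = sum fun i => #K ^ #(s i) := by simp only [mk_sigma, power_def]
    _ ≤ sum fun _ : ι => 2 ^ #K := sum_le_sum _ _ fun i =>
      (power_le_power_left (mk_ne_zero K) (hs i)).trans_eq (power_self_eq (aleph0_le_mk K))
    _ = #ι * 2 ^ #K := sum_const' _ _
    _ ≤ 2 ^ #K * 2 ^ #K := mul_le_mul_left hι _
    _ = 2 ^ #K := mul_eq_self ((aleph0_le_mk K).trans (cantor _).le)

namespace ErdosRado

section Branch

variable {Λ W K : Type u} [LinearOrder Λ] [WellFoundedLT Λ] [LinearOrder W] [WellFoundedLT W]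
  (c : Λ → Λ → K)

/-- The branch of the Erdős–Rado tree leading to `a`; inserting `a` keeps the minimum defined once
the branch has reached `a`. -/
noncomputable def branch (a : Λ) : W → Λ :=
  wellFounded_lt.fix fun β x => wellFounded_lt.min
    (insert a {y | ∀ γ (hγ : γ < β), x γ hγ ≠ y ∧ c (x γ hγ) y = c (x γ hγ) a})
    (insert_nonempty _ _)

def candidates (a : Λ) (β : W) : Set Λ :=
  {y | ∀ γ < β, branch c a γ ≠ y ∧ c (branch c a γ) y = c (branch c a γ) a}

theorem branch_eq (a : Λ) (β : W) :
    branch c a β = wellFounded_lt.min (insert a (candidates c a β)) (insert_nonempty _ _) :=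
  wellFounded_lt.fix_eq _ _

variable {c}

theorem branch_le_of_mem_candidates {a y : Λ} {β : W} (hy : y ∈ candidates c a β) :
    branch c a β ≤ y := by
  rw [branch_eq]
  exact wellFounded_lt.min_le (mem_insert_of_mem a hy)

theorem self_mem_candidates {a : Λ} {β : W} (h : ∀ γ < β, branch c a γ ≠ a) :
    a ∈ candidates c a β :=
  fun γ hγ => ⟨h γ hγ, rfl⟩

theorem branch_mem_candidates {a : Λ} {β : W} (h : ∀ γ < β, branch c a γ ≠ a) :
    branch c a β ∈ candidates c a β := by
  have hmin := wellFounded_lt.min_mem (insert a (candidates c a β)) (insert_nonempty _ _)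
  rw [← branch_eq] at hmin
  rcases hmin with hmin | hmin
  · rw [hmin]
    exact self_mem_candidates h
  · exact hmin

theorem branch_lt_of_lt {a : Λ} {β γ : W} (h : ∀ δ < γ, branch c a δ ≠ a) (hβγ : β < γ) :
    branch c a β < branch c a γ ∧ c (branch c a β) (branch c a γ) = c (branch c a β) a := by
  have hγ := branch_mem_candidates h
  obtain ⟨hne, hcol⟩ := hγ β hβγ
  exact ⟨(branch_le_of_mem_candidates fun δ hδ => hγ δ (hδ.trans hβγ)).lt_of_ne hne, hcol⟩

theorem branch_eq_branch_of_colors_eq {a b : Λ} {ρ : W}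
    (ha : ∀ γ < ρ, branch c a γ ≠ a) (hb : ∀ γ < ρ, branch c b γ ≠ b)
    (hcol : ∀ γ < ρ, c (branch c a γ) a = c (branch c b γ) b) :
    ∀ β ≤ ρ, branch c a β = branch c b β := by
  intro β
  induction β using WellFoundedLT.induction with
  | _ β ih =>
    intro hβ
    have hcand : candidates c a β = candidates c b β := by
      ext y
      refine forall₂_congr fun γ hγ => ?_
      rw [hcol γ (hγ.trans_le hβ), ih γ hγ (hγ.le.trans hβ)]
    have hinsert : insert a (candidates c a β) = insert b (candidates c b β) := by
      rw [insert_eq_of_mem (self_mem_candidates fun γ hγ => ha γ (hγ.trans_le hβ)),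
        insert_eq_of_mem (self_mem_candidates fun γ hγ => hb γ (hγ.trans_le hβ)), hcand]
    simp only [branch_eq, hinsert]

theorem mk_le_sigma_of_forall_exists_branch_eq (h : ∀ a : Λ, ∃ β : W, branch c a β = a) :
    #Λ ≤ #(Σ β : W, Iio β → K) := by
  choose ρ hρ hmin using fun a => wellFounded_lt.has_min {β : W | branch c a β = a} (h a)
  have hne : ∀ a, ∀ γ < ρ a, branch c a γ ≠ a := fun a γ hγ heq => hmin a γ heq hγ
  refine mk_le_of_injective (f := fun a => ⟨ρ a, fun γ => c (branch c a γ.1) a⟩) fun a b hab => ?_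
  obtain ⟨hρab, hcol⟩ := Sigma.mk.inj_iff.mp hab
  rw [← hρab] at hcol
  have hcol' : ∀ γ < ρ a, c (branch c a γ) a = c (branch c b γ) b :=
    fun γ hγ => congrFun (eq_of_heq hcol) ⟨γ, hγ⟩
  have hbranch := branch_eq_branch_of_colors_eq (hne a) (hρab ▸ hne b) hcol' (ρ a) le_rfl
  rwa [hρ a, hρab, hρ b] at hbranch

theorem exists_strictMono_of_forall_branch_ne [Infinite K] (hKW : #K < #W) {a : Λ}
    (ha : ∀ β : W, branch c a β ≠ a) :
    ∃ i : K, ∃ s : ℕ → Λ, StrictMono s ∧ ∀ m n, m < n → c (s m) (s n) = i := by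
  obtain ⟨i, hi⟩ := exists_infinite_fiber' (fun β : W => c (branch c a β) a) hKW
  obtain ⟨t, ht⟩ := Infinite.exists_strictMono_of_wellFoundedLT
    ((fun β : W => c (branch c a β) a) ⁻¹' {i})
  have hbranch {m n : ℕ} (hmn : m < n) := branch_lt_of_lt (fun δ _ => ha δ) (ht hmn)
  refine ⟨i, fun n => branch c a (t n).1, fun m n hmn => (hbranch hmn).1, fun m n hmn => ?_⟩
  exact (hbranch hmn).2.trans (t m).2

end Branch

theorem exists_strictMono_monochromatic {Λ K : Type u} [LinearOrder Λ] [WellFoundedLT Λ]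
    [Infinite K] (c : Λ → Λ → K) (hΛ : 2 ^ #K < #Λ) :
    ∃ i : K, ∃ s : ℕ → Λ, StrictMono s ∧ ∀ m n, m < n → c (s m) (s n) = i := by
  let W := (Order.succ #K).ord.ToType
  by_cases h : ∃ a : Λ, ∀ β : W, branch c a β ≠ a
  · obtain ⟨a, ha⟩ := h
    exact exists_strictMono_of_forall_branch_ne (by simp [W]) ha
  · push Not at h
    refine absurd ((mk_le_sigma_of_forall_exists_branch_eq h).trans
      (mk_sigma_arrow_le _ ?_ fun β => ?_)) hΛ.not_ge
    · simpa [W] using Order.succ_le_of_lt (cantor #K)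
    · exact Order.lt_succ_iff.mp (by simpa [W] using mk_Iio_lt β)

end ErdosRado

/-- For an ultrafilter `D` on an infinite cardinal `κ`, the order `<_D` on
ordinal-valued functions on `κ` (defined by `f <_D g` iff `{i : f i < g i} ∈ D`)
admits no strictly decreasing chain of length `(2^κ)⁺`: there is no sequence
`⟨f ξ : ξ < (2^κ)⁺⟩` such that `{i : f ζ i < f ξ i} ∈ D` whenever `ξ < ζ`. -/
theorem no_long_decreasing_chain
    {κ : Type u} [Infinite κ] (D : Ultrafilter κ) :
    ¬ ∃ f : (Order.succ ((2 : Cardinal.{u}) ^ Cardinal.mk κ)).ord.ToType →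
        (κ → Ordinal.{u}),
      ∀ ξ ζ, ξ < ζ → {i | f ζ i < f ξ i} ∈ (D : Filter κ) := by
  rintro ⟨f, hf⟩
  have hwitness : ∀ ξ ζ, ∃ i, ξ < ζ → f ζ i < f ξ i := fun ξ ζ => by
    by_cases h : ξ < ζ
    · obtain ⟨i, hi⟩ := Filter.nonempty_of_mem (hf ξ ζ h)
      exact ⟨i, fun _ => hi⟩
    · exact ⟨Classical.arbitrary κ, fun h' => absurd h' h⟩
  choose c hc using hwitness
  obtain ⟨i, s, hs, hcol⟩ := ErdosRado.exists_strictMono_monochromatic c (by simp)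
  refine not_strictAnti_of_wellFoundedLT (fun n => f (s n) i) fun m n hmn => ?_
  exact hcol m n hmn ▸ hc _ _ (hs hmn)
end
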